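/- Let κ and γ be infinite cardinals. Then κ has the γ-MInA if and only if the free subset property Fr_γ(κ,ω) holds. -/

import Mathlib

open Cardinal Set

universe u v

/-- `f` depends on only finitely many coordinates of its argument; this is exactly continuity
with respect to the product topology on `ι → C`, where `C` and `X` carry the discrete topology. -/
def FinDep {ι : Type v} {C : Type u} {X : Type*} (f : (ι → C) → X) : Prop :=
  ∀ h : ι → C, ∃ F : Finset ι, ∀ h' : ι → C, (∀ i ∈ F, h' i = h i) → f h' = f h

/-- The canonical type of `κ`-many colours: the ordinals below `κ.ord`,
equipped with their natural linear order. -/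
abbrev HatColour (κ : Cardinal.{u}) : Type u := κ.ord.ToType

/-- `A` is mutually `F`-independent: no `α ∈ A` lies in a value of a function of the countable
family `F` applied to arguments from `A \\ {α}`. -/
def MutuallyIndep {O : Type u} (F : ℕ → Σ n : ℕ, (Fin n → O) → Set O) (A : Set O) : Prop :=
  ∀ α ∈ A, ∀ i : ℕ, ∀ x : Fin (F i).1 → O, (∀ j, x j ∈ A \ {α}) → α ∉ (F i).2 x

/-- `κ` has the `γ`-MInA: for every countable family of finitary functions
`f : κ^n → [κ]^{<γ}` there is a countably infinite mutually independent subset of `κ`. -/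
def MInA (κ γ : Cardinal.{u}) : Prop :=
  ∀ F : ℕ → Σ n : ℕ, (Fin n → HatColour κ) → Set (HatColour κ),
    (∀ i x, #((F i).2 x) < γ) →
    ∃ A : Set (HatColour κ), A.Countable ∧ A.Infinite ∧ MutuallyIndep F A

/-- `κ` is strongly MInA: it has the `γ`-MInA for every infinite cardinal `γ < κ`. -/
def StronglyMInA (κ : Cardinal.{u}) : Prop :=
  ∀ γ : Cardinal.{u}, ℵ₀ ≤ γ → γ < κ → MInA κ γ

/-- The free subset property `Fr_γ(κ, ω)`: for every family of at most `γ`-many finitary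
functions `f : κ^n → κ` there is a countably infinite free subset of `κ`. -/
def FreeSubsetProp (κ γ : Cardinal.{u}) : Prop :=
  ∀ (ι : Type u) (F : ι → Σ n : ℕ, (Fin n → HatColour κ) → HatColour κ), #ι ≤ γ →
    ∃ A : Set (HatColour κ), A.Countable ∧ A.Infinite ∧
      ∀ α ∈ A, ∀ i : ι, ∀ x : Fin (F i).1 → HatColour κ,
        (∀ j, x j ∈ A \ {α}) → α ≠ (F i).2 x

/-!
For `Fr_γ(κ, ω) → MInA`, enumerate each value `F i x`, a set of size `< γ`, by ordinals below `γ`: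
the `ℵ₀ · γ = γ` functions picking the `ξ`-th element of `F i x` have a free set, and a free set
for them is mutually independent.

For `MInA → Fr_γ(κ, ω)`, index the given functions `G ξ` by ordinals `ξ < γ`. The set-valued
function `(β, y, x) ↦ {G ξ x | ξ ≤ ℓ}`, where `ℓ` is least with `G ℓ y = β`, takes values of size
`< γ`. Let `A` be mutually independent for these functions. If `A` is not free, let `η` be the least
index of a violation `α₀ = G η x₀` inside `A`. Then `A \ {α₀}` is free: a violation `β = G ξ y`
there has least index `ℓ ≥ η`, so `α₀` lies in the value at `(β, y, x₀)`, against independence.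
-/

namespace FreeSubset

variable {O : Type u}

def IsFree {ι : Type*} (G : ι → Σ n : ℕ, (Fin n → O) → O) (A : Set O) : Prop :=
  ∀ α ∈ A, ∀ i : ι, ∀ x : Fin (G i).1 → O, (∀ j, x j ∈ A \ {α}) → α ≠ (G i).2 x

theorem IsFree.comp {ι ι' : Type*} {G : ι → Σ n : ℕ, (Fin n → O) → O} {A : Set O}
    (hA : IsFree G A) (f : ι' → ι) : IsFree (G ∘ f) A :=
  fun α hα i => hA α hα (f i)

/-- `g` sends the tuple `y` to `v`; this is false whenever the arity of `g` is not `m`. -/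
def EvalsTo (g : Σ n : ℕ, (Fin n → O) → O) {m : ℕ} (y : Fin m → O) (v : O) : Prop :=
  ∃ h : g.1 = m, g.2 (fun j => y (Fin.cast h j)) = v

theorem evalsTo_self (g : Σ n : ℕ, (Fin n → O) → O) (y : Fin g.1 → O) : EvalsTo g y (g.2 y) :=
  ⟨rfl, rfl⟩

theorem EvalsTo.unique {g : Σ n : ℕ, (Fin n → O) → O} {m : ℕ} {y : Fin m → O} {v w : O}
    (hv : EvalsTo g y v) (hw : EvalsTo g y w) : v = w := by
  obtain ⟨rfl, rfl⟩ := hv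
  obtain ⟨_, rfl⟩ := hw
  rfl

section Bounded

variable {C : Type u} [LinearOrder C] (G : C → Σ n : ℕ, (Fin n → O) → O)

def boundedValues {m n : ℕ} (β : O) (y : Fin m → O) (x : Fin n → O) : Set O :=
  {v | ∃ ℓ, IsLeast {ξ | EvalsTo (G ξ) y β} ℓ ∧ ∃ ξ ≤ ℓ, EvalsTo (G ξ) x v}

/-- The arguments `β, y, x` of `boundedValues` concatenated into one tuple. -/
def boundedFunction (m n : ℕ) : Σ N : ℕ, (Fin N → O) → Set O :=
  ⟨m + n + 1, fun t =>
    boundedValues G (t 0) (fun j => t (Fin.castAdd n j).succ) (fun j => t (Fin.natAdd m j).succ)⟩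

def boundedFamily (k : ℕ) : Σ N : ℕ, (Fin N → O) → Set O :=
  boundedFunction G k.unpair.1 k.unpair.2

theorem mk_boundedValues_lt {γ : Cardinal.{u}} (hγ : 0 < γ) (hC : ∀ c : C, #(Iic c) < γ)
    {m n : ℕ} (β : O) (y : Fin m → O) (x : Fin n → O) : #(boundedValues G β y x) < γ := by
  by_cases hL : ∃ ℓ, IsLeast {ξ | EvalsTo (G ξ) y β} ℓ
  · obtain ⟨ℓ, hℓ⟩ := hL
    have hindex : ∀ v : boundedValues G β y x, ∃ ξ : Iic ℓ, EvalsTo (G ξ) x v := by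
      rintro ⟨v, ℓ', hℓ', ξ, hξ, hv⟩
      exact ⟨⟨ξ, hℓ'.unique hℓ ▸ hξ⟩, hv⟩
    choose index hindex using hindex
    have hinj : Function.Injective index := fun v w hvw =>
      Subtype.ext ((hindex v).unique (hvw ▸ hindex w))
    exact (mk_le_of_injective hinj).trans_lt (hC ℓ)
  · have hempty : boundedValues G β y x = ∅ :=
      eq_empty_of_forall_notMem fun v ⟨ℓ, hℓ, _⟩ => hL ⟨ℓ, hℓ⟩
    rwa [hempty, mk_eq_zero]

variable {G}

theorem notMem_boundedValues_of_mutuallyIndep {A : Set O}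
    (hA : MutuallyIndep (boundedFamily G) A) {α β : O} {m n : ℕ} {y : Fin m → O}
    {x : Fin n → O} (hα : α ∈ A) (hβ : β ∈ A \ {α}) (hy : ∀ j, y j ∈ A \ {α})
    (hx : ∀ j, x j ∈ A \ {α}) : α ∉ boundedValues G β y x := by
  have hindep := hA α hα (Nat.pair m n)
  rw [boundedFamily, Nat.unpair_pair] at hindep
  have ht : ∀ j, (Fin.cons β (Fin.append y x) : Fin (m + n + 1) → O) j ∈ A \ {α} := by
    refine Fin.cases hβ fun j => ?_
    refine Fin.addCases (fun j => ?_) (fun j => ?_) j <;> simp [hy, hx]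
  simpa [boundedFunction] using hindep _ ht

variable [WellFoundedLT C]

theorem exists_isFree_diff_of_mutuallyIndep {A : Set O}
    (hA : MutuallyIndep (boundedFamily G) A) : ∃ s : Set O, s.Subsingleton ∧ IsFree G (A \ s) := by
  by_cases hfree : IsFree G A
  · exact ⟨∅, subsingleton_empty, by rwa [sdiff_empty]⟩
  let violations : Set C :=
    {ξ | ∃ α ∈ A, ∃ x : Fin (G ξ).1 → O, (∀ j, x j ∈ A \ {α}) ∧ (G ξ).2 x = α}
  have hviolations : violations.Nonempty := by
    simp only [IsFree, not_forall, not_not] at hfree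
    obtain ⟨α, hα, ξ, x, hx, hξ⟩ := hfree
    exact ⟨ξ, α, hα, x, hx, hξ.symm⟩
  obtain ⟨η, ⟨α₀, hα₀, x₀, hx₀, hη⟩, hη_min⟩ :=
    wellFounded_lt.has_min violations hviolations
  refine ⟨{α₀}, subsingleton_singleton, fun β hβ ξ y hy hβy => ?_⟩
  obtain ⟨ℓ, hℓ, hℓ_min⟩ := wellFounded_lt.has_min {ξ | EvalsTo (G ξ) y β}
    ⟨ξ, hβy ▸ evalsTo_self (G ξ) y⟩
  have hηℓ : η ≤ ℓ := by
    obtain ⟨hℓy, hℓβ⟩ := hℓ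
    refine not_lt.1 (hη_min ℓ ⟨β, hβ.1, fun j => y (Fin.cast hℓy j), fun j => ?_, hℓβ⟩)
    exact ⟨(hy _).1.1, (hy _).2⟩
  have hℓ_least : IsLeast {ξ | EvalsTo (G ξ) y β} ℓ := ⟨hℓ, fun ξ hξ => not_lt.1 (hℓ_min ξ hξ)⟩
  exact notMem_boundedValues_of_mutuallyIndep hA hα₀ hβ (fun j => (hy j).1) hx₀
    ⟨ℓ, hℓ_least, η, hηℓ, hη ▸ evalsTo_self (G η) x₀⟩

end Bounded

section Pointwise

variable [Nonempty O] {C : Type*} (F : ℕ → Σ n : ℕ, (Fin n → O) → Set O)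
  (code : ∀ i (x : Fin (F i).1 → O), (F i).2 x ↪ C)

/-- The function of index `(i, c)` sends `x` to the element of `F i x` with code `c` (if any). -/
noncomputable def pointFamily (p : ℕ × C) : Σ n : ℕ, (Fin n → O) → O :=
  ⟨(F p.1).1, fun x =>
    Function.extend (code p.1 x) Subtype.val (fun _ => Classical.arbitrary O) p.2⟩

theorem pointFamily_code {i : ℕ} (x : Fin (F i).1 → O) (s : (F i).2 x) :
    (pointFamily F code (i, code i x s)).2 x = s := by
  dsimp only [pointFamily]
  exact (code i x).injective.extend_apply Subtype.val _ s

variable {F code}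

theorem IsFree.mutuallyIndep {A : Set O} (hA : IsFree (pointFamily F code) A) :
    MutuallyIndep F A := fun α hα i x hx hαx =>
  hA α hα (i, code i x ⟨α, hαx⟩) x hx (pointFamily_code F code x ⟨α, hαx⟩).symm

end Pointwise

theorem mk_Iic_toType_ord_lt {γ : Cardinal.{u}} (hγ : ℵ₀ ≤ γ) (c : γ.ord.ToType) :
    #(Iic c) < γ := by
  rw [← Iio_insert]
  exact mk_insert_le.trans_lt (add_lt_of_lt hγ (by simpa using mk_Iio_lt c)
    (one_lt_aleph0.trans_le hγ))

end FreeSubset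

open FreeSubset

/-- For infinite `κ` and `γ`: `κ` has the `γ`-MInA iff the free subset property `Fr_γ(κ,ω)`
holds. -/
theorem stmt17 (κ γ : Cardinal.{u}) (hκ : ℵ₀ ≤ κ) (hγ : ℵ₀ ≤ γ) :
    MInA κ γ ↔ FreeSubsetProp κ γ := by
  constructor
  · intro hMInA ι F hι
    obtain ⟨φ⟩ : Nonempty (ι ↪ HatColour γ) := by rwa [← le_def, mk_ord_toType]
    let G := Function.extend φ F fun _ => ⟨1, fun v => v 0⟩
    obtain ⟨A, hcount, hinf, hA⟩ := hMInA (boundedFamily G) fun _ _ =>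
      mk_boundedValues_lt G (aleph0_pos.trans_le hγ) (mk_Iic_toType_ord_lt hγ) _ _ _
    obtain ⟨s, hs, hfree⟩ := exists_isFree_diff_of_mutuallyIndep hA
    refine ⟨A \ s, hcount.mono sdiff_subset, hinf.sdiff hs.finite, ?_⟩
    have hGF : G ∘ φ = F := Function.extend_comp φ.injective _ _
    exact hGF ▸ hfree.comp φ
  · intro hFree F hF
    have : Nonempty (HatColour κ) := by
      rw [Ordinal.nonempty_toType_iff, ne_eq, ord_eq_zero]
      exact (aleph0_pos.trans_le hκ).ne'
    have code : ∀ i x, (F i).2 x ↪ HatColour γ := fun i x =>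
      Classical.choice (by rw [← le_def, mk_ord_toType]; exact (hF i x).le)
    obtain ⟨A, hcount, hinf, hA⟩ := hFree _ (pointFamily F code) (by simp [aleph0_mul_eq hγ])
    exact ⟨A, hcount, hinf, IsFree.mutuallyIndep hA⟩
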